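/- Monotonic improvement guarantee of rollout (Theorem 1, stochastic finite-horizon form): let πb be a policy and let σ be a nonstationary policy such that for every k and every state s, the action σ (k+1) s minimizes a ↦ g s a + ∑' s', (P s a) s' * V πb k s' over adm s. Then for every horizon k and every state s, the expected rollout cost satisfies J σ k s ≤ V πb k s; that is, the expected performance of the rollout policy is no worse than that of the base policy from every state. -/
import Mathlib


open scoped ENNReal

/-- Expected k-step cost of a stationary policy `π` under stochastic kernel `P`:
`V π 0 s = 0` and `V π (k+1) s = g s (π s) + ∑' s', (P s (π s)) s' * V π k s'`. -/
noncomputable def polCostS {S A : Type*} (P : S → A → PMF S) (g : S → A → ℝ≥0∞)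
    (π : S → A) : ℕ → S → ℝ≥0∞
  | 0 => fun _ => 0
  | k + 1 => fun s => g s (π s) + ∑' s', (P s (π s)) s' * polCostS P g π k s'

/-- Expected cost of a nonstationary policy `σ`:
`J σ 0 s = 0` and `J σ (k+1) s = g s (σ (k+1) s) + ∑' s', (P s (σ (k+1) s)) s' * J σ k s'`. -/
noncomputable def nonstatCostS {S A : Type*} (P : S → A → PMF S) (g : S → A → ℝ≥0∞)
    (σ : ℕ → S → A) : ℕ → S → ℝ≥0∞
  | 0 => fun _ => 0
  | k + 1 => fun s =>
      g s (σ (k + 1) s) + ∑' s', (P s (σ (k + 1) s)) s' * nonstatCostS P g σ k s'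

/-- Monotonic improvement guarantee of rollout (stochastic finite-horizon form). -/
theorem stochastic_rollout_monotonic_improvement
    {S A : Type*} (adm : S → Finset A) (hadm : ∀ s, (adm s).Nonempty)
    (P : S → A → PMF S) (g : S → A → ℝ≥0∞)
    (πb : S → A) (hπb : ∀ s, πb s ∈ adm s)
    (σ : ℕ → S → A) (hσ : ∀ k s, σ k s ∈ adm s)
    (hmin : ∀ k s, ∀ a ∈ adm s,
      g s (σ (k + 1) s) + ∑' s', (P s (σ (k + 1) s)) s' * polCostS P g πb k s'
        ≤ g s a + ∑' s', (P s a) s' * polCostS P g πb k s') :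
    ∀ k s, nonstatCostS P g σ k s ≤ polCostS P g πb k s := by
  intro k
  induction k with
  | zero => intro s; simp [nonstatCostS, polCostS]
  | succ k ih =>
    intro s
    calc nonstatCostS P g σ (k + 1) s
        = g s (σ (k + 1) s) + ∑' s', (P s (σ (k + 1) s)) s' * nonstatCostS P g σ k s' := rfl
      _ ≤ g s (σ (k + 1) s) + ∑' s', (P s (σ (k + 1) s)) s' * polCostS P g πb k s' := by
          gcongr with s'
          exact ih s'
      _ ≤ g s (πb s) + ∑' s', (P s (πb s)) s' * polCostS P g πb k s' :=
          hmin k s (πb s) (hπb s)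
      _ = polCostS P g πb (k + 1) s := rfl
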